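/- arXiv:2201.09402 — 5 statements merged into one kernel-verified Lean document; each statement's English description precedes it below -/
import Mathlib

section
/- For every positive integer n, there exists a finite group G with commuting probability P(G) = 1/n. -/
/-- The commuting probability of a group. -/
noncomputable def probComm (G : Type*) [Group G] : ℚ :=
  (Nat.card {p : G × G // p.1 * p.2 = p.2 * p.1} : ℚ) / (Nat.card G : ℚ) ^ 2

lemma reciprocalFactors_ne_zero : ∀ (n : ℕ), n ≠ 0 →
    ∀ m ∈ DihedralGroup.reciprocalFactors n, m ≠ 0 := by
  intro n
  induction n using Nat.strong_induction_on with
  | _ n ih =>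
    intro hn m hm
    by_cases h1 : n = 1
    · subst h1; simp at hm
    rcases Nat.even_or_odd n with h2 | h2
    · rw [DihedralGroup.reciprocalFactors_even hn h2] at hm
      rcases List.mem_cons.mp hm with rfl | hm
      · norm_num
      · have hlt : n / 2 < n := Nat.div_lt_self (Nat.pos_of_ne_zero hn) one_lt_two
        have hne : n / 2 ≠ 0 := by omega
        exact ih _ hlt hne m hm
    · rw [DihedralGroup.reciprocalFactors_odd h1 h2] at hm
      rcases List.mem_cons.mp hm with rfl | hm
      · have key : n % 4 = 1 ∨ n % 4 = 3 := Nat.odd_mod_four_iff.mp (Nat.odd_iff.mp h2)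
        rcases key with h | h <;> simp [h] <;> omega
      · have hlt : n / 4 + 1 < n := by omega
        exact ih _ hlt (by omega) m hm

theorem exists_group_probComm_eq_one_div (n : ℕ) (hn : 0 < n) :
    ∃ (G : Type) (inst : Group G), Finite G ∧ @probComm G inst = 1 / (n : ℚ) := by
  refine ⟨DihedralGroup.Product (DihedralGroup.reciprocalFactors n), inferInstance, ?_, ?_⟩
  · have : ∀ i : Fin (DihedralGroup.reciprocalFactors n).length,
        Finite (DihedralGroup (DihedralGroup.reciprocalFactors n)[i]) := by
      intro i
      have h := reciprocalFactors_ne_zero n hn.ne' _ (List.getElem_mem i.isLt)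
      have : NeZero ((DihedralGroup.reciprocalFactors n)[i]) := ⟨h⟩
      infer_instance
    exact Pi.finite
  · have := DihedralGroup.commProb_reciprocal n
    rw [← this]
    rfl
end

section
/- Let (K_i) be a sequence of finite groups with K_i' ≤ Z(K_i), all having commutator subgroup identified with a fixed finite abelian group K'. Then the set F = {H ≤ K' : the sequence ([K_i : Z̄(K_i/H)])_i is bounded} is a filter in the lattice of subgroups of K': it contains K', is closed under intersections, and is upward closed. Consequently there is a smallest subgroup H₀ ≤ K' such that ([K_i : Z̄(K_i/H₀)])_i is bounded. -/
open scoped commutatorElement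

lemma mem_comm' {K : Type*} [Group K] (k l : K) : ⁅k, l⁆ ∈ commutator K :=
  Subgroup.commutator_mem_commutator (Subgroup.mem_top k) (Subgroup.mem_top l)

/-!
For `H ≤ K'` put `Z̄(K/H) = {k | [k, l] ∈ H for all l}`. Since `K' ≤ Z(K)`, `H` is normal in `K`
and `Z̄(K/H)` is the preimage of the centre of `K/H`, hence a subgroup; moreover
`Z̄(K/(H₁ ⊓ H₂)) = Z̄(K/H₁) ⊓ Z̄(K/H₂)` and `H ↦ Z̄(K/H)` is monotone. As
`[K : S ⊓ T] ≤ [K : S] [K : T]`, the subgroups with uniformly bounded index form an upward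
closed, inf-closed family containing `K'`. There are only finitely many subgroups of the finite
group `K'`, so the infimum of this family belongs to it and is its least element.
-/

section

open Subgroup

variable {G A : Type*} [Group G] [Group A]

lemma Subgroup.card_le_mul_card_iff_index_le [Finite G] (S : Subgroup G) (n : ℕ) :
    Nat.card G ≤ n * Nat.card S ↔ S.index ≤ n := by
  rw [← S.index_mul_card]
  exact Nat.mul_le_mul_right_iff Nat.card_pos

def commutatorImage (e : commutator G ≃* A) (H : Subgroup A) : Subgroup G :=
  (H.comap e.toMonoidHom).map (commutator G).subtype

lemma mem_commutatorImage (e : commutator G ≃* A) (H : Subgroup A) {g : G}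
    (hg : g ∈ commutator G) : g ∈ commutatorImage e H ↔ e ⟨g, hg⟩ ∈ H :=
  mem_map_iff_mem (commutator G).subtype_injective (x := ⟨g, hg⟩)

lemma commutatorImage_normal (hc : commutator G ≤ center G) (e : commutator G ≃* A)
    (H : Subgroup A) : (commutatorImage e H).Normal where
  conj_mem g hg k := by
    have hcentral : g ∈ center G := hc (map_subtype_le _ hg)
    rwa [mem_center_iff.mp hcentral k, mul_inv_cancel_right]

/-- The paper's `Z̄(G/H)`, with `H ≤ A` read inside `G'` through `e`. -/
def relCenter (hc : commutator G ≤ center G) (e : commutator G ≃* A) (H : Subgroup A) :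
    Subgroup G :=
  haveI := commutatorImage_normal hc e H
  (commutatorImage e H).upperCentralSeriesStep

variable (hc : commutator G ≤ center G) (e : commutator G ≃* A)

lemma mem_relCenter {H : Subgroup A} {k : G} :
    k ∈ relCenter hc e H ↔ ∀ l : G, e ⟨⁅k, l⁆, mem_comm' k l⟩ ∈ H :=
  forall_congr' fun l => mem_commutatorImage e H (mem_comm' k l)

lemma relCenter_top : relCenter hc e ⊤ = ⊤ :=
  eq_top_iff.mpr fun _ _ => (mem_relCenter hc e).mpr fun _ => mem_top _

lemma relCenter_inf (H₁ H₂ : Subgroup A) :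
    relCenter hc e (H₁ ⊓ H₂) = relCenter hc e H₁ ⊓ relCenter hc e H₂ := by
  ext k
  simp only [mem_inf, mem_relCenter, forall_and]

lemma relCenter_mono : Monotone (relCenter hc e) :=
  fun _ _ hle _ hk => (mem_relCenter hc e).mpr fun l => hle ((mem_relCenter hc e).mp hk l)

lemma card_le_mul_card_iff_index_relCenter_le [Finite G] (H : Subgroup A) (n : ℕ) :
    Nat.card G ≤ n * Nat.card {k : G // ∀ l : G, e ⟨⁅k, l⁆, mem_comm' k l⟩ ∈ H} ↔
      (relCenter hc e H).index ≤ n := by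
  rw [← card_le_mul_card_iff_index_le,
    Nat.card_congr (Equiv.subtypeEquivRight fun k => (mem_relCenter hc e).symm)]

end

open Subgroup

theorem bounded_index_filter {A : Type*} [CommGroup A] [Finite A]
    (K : ℕ → Type*) [∀ i, Group (K i)] [∀ i, Finite (K i)]
    (hc : ∀ i, commutator (K i) ≤ Subgroup.center (K i))
    (e : ∀ i, (↥(commutator (K i))) ≃* A)
    (Bdd : Subgroup A → Prop)
    (hBdd : ∀ H : Subgroup A, Bdd H ↔ ∃ n : ℕ, ∀ i,
      Nat.card (K i) ≤ n * Nat.card {k : K i // ∀ l : K i, e i ⟨⁅k, l⁆, mem_comm' k l⟩ ∈ H}) :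
    Bdd ⊤ ∧
    (∀ H₁ H₂ : Subgroup A, Bdd H₁ → Bdd H₂ → Bdd (H₁ ⊓ H₂)) ∧
    (∀ H₁ H₂ : Subgroup A, H₁ ≤ H₂ → Bdd H₁ → Bdd H₂) ∧
    ∃ H₀ : Subgroup A, Bdd H₀ ∧ ∀ H : Subgroup A, Bdd H ↔ H₀ ≤ H := by
  have hBdd_index (H : Subgroup A) :
      Bdd H ↔ ∃ n : ℕ, ∀ i, (relCenter (hc i) (e i) H).index ≤ n := by
    rw [hBdd]
    exact exists_congr fun n => forall_congr' fun i =>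
      card_le_mul_card_iff_index_relCenter_le (hc i) (e i) H n
  have hTop : Bdd ⊤ := (hBdd_index ⊤).mpr ⟨1, fun i => by simp [relCenter_top]⟩
  have hInf (H₁ H₂ : Subgroup A) (h₁ : Bdd H₁) (h₂ : Bdd H₂) : Bdd (H₁ ⊓ H₂) := by
    obtain ⟨n₁, hn₁⟩ := (hBdd_index H₁).mp h₁
    obtain ⟨n₂, hn₂⟩ := (hBdd_index H₂).mp h₂
    refine (hBdd_index _).mpr ⟨n₁ * n₂, fun i => ?_⟩
    rw [relCenter_inf]
    exact index_inf_le.trans (Nat.mul_le_mul (hn₁ i) (hn₂ i))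
  have hMono (H₁ H₂ : Subgroup A) (hle : H₁ ≤ H₂) (h₁ : Bdd H₁) : Bdd H₂ := by
    obtain ⟨n, hn⟩ := (hBdd_index H₁).mp h₁
    exact (hBdd_index H₂).mpr
      ⟨n, fun i => (index_antitone (relCenter_mono (hc i) (e i) hle)).trans (hn i)⟩
  have hLeast : Bdd (sInf {H | Bdd H}) :=
    InfClosed.sInf_mem (fun H₁ h₁ H₂ h₂ => hInf H₁ H₂ h₁ h₂) (Set.toFinite _) hTop subset_rfl
  exact ⟨hTop, hInf, hMono, sInf {H | Bdd H}, hLeast,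
    fun H => ⟨fun hH => sInf_le hH, fun hle => hMono _ H hle hLeast⟩⟩
end

section
/- Let K be a finite group with K' ≤ Z(K), let χ : K' → ℂˣ be a homomorphism, and let φ, ψ : K → K' be homomorphisms. Suppose there exist k₀, l₀ ∈ K with χ([k₀,l]ψ(l)) = 1 for all l ∈ K and χ(φ(k)[k,l₀]) = 1 for all k ∈ K. Then the absolute value of (1/|K|²) ∑_{k ∈ K} ∑_{l ∈ K} χ(φ(k)[k,l]ψ(l)) equals [K : Z̄(K/ker χ)]⁻¹, where Z̄(K/H) = {k ∈ K : [k,l] ∈ H for all l ∈ K}. -/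
/-!
As `K'` is central, `b k l = χ ⁅k, l⁆` is bimultiplicative. The hypotheses say
`χ ∘ φ = (b · l₀)⁻¹` and `χ ∘ ψ = (b k₀ ·)⁻¹`, so after the substitution `k ↦ k k₀`, `l ↦ l l₀`
each summand becomes `b k l * (b k₀ l₀)⁻¹` (completing the square). By orthogonality of
characters, `∑ l, b k l` is `|K|` or `0` according as `b k` is trivial or not, and `b k₀ l₀` is a
root of unity.
-/

open scoped commutatorElement

section CentralCommutator

variable {K : Type*} [Group K]

theorem commutatorElement_mul_left_of_commutator_le_center
    (hc : commutator K ≤ Subgroup.center K) (a b c : K) : ⁅a * b, c⁆ = ⁅a, c⁆ * ⁅b, c⁆ := by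
  rw [commutatorElement_mul_left_eq_conj_mul, Subgroup.mem_center_iff.mp (hc (mem_comm' b c)) a,
    mul_inv_cancel_right, Subgroup.mem_center_iff.mp (hc (mem_comm' b c))]

theorem commutatorElement_mul_right_of_commutator_le_center
    (hc : commutator K ≤ Subgroup.center K) (a b c : K) : ⁅a, b * c⁆ = ⁅a, b⁆ * ⁅a, c⁆ := by
  rw [commutatorElement_mul_right_eq_mul_conj, mul_assoc _ b,
    Subgroup.mem_center_iff.mp (hc (mem_comm' a c)) b, ← mul_assoc, mul_inv_cancel_right]

def commutatorPairing {M : Type*} [Monoid M] (χ : commutator K →* M) (k l : K) : M :=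
  χ ⟨⁅k, l⁆, mem_comm' k l⟩

variable {M : Type*} [Monoid M] (hc : commutator K ≤ Subgroup.center K) (χ : commutator K →* M)
include hc

theorem commutatorPairing_mul_left (k k' l : K) :
    commutatorPairing χ (k * k') l = commutatorPairing χ k l * commutatorPairing χ k' l :=
  (congrArg χ (Subtype.ext (commutatorElement_mul_left_of_commutator_le_center hc k k' l))).trans
    (map_mul χ _ _)

theorem commutatorPairing_mul_right (k l l' : K) :
    commutatorPairing χ k (l * l') = commutatorPairing χ k l * commutatorPairing χ k l' :=
  (congrArg χ (Subtype.ext (commutatorElement_mul_right_of_commutator_le_center hc k l l'))).trans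
    (map_mul χ _ _)

end CentralCommutator

section Sums

variable {K : Type*} [Group K] (hc : commutator K ≤ Subgroup.center K)
include hc

theorem mul_commutatorPairing_mul_of_mul_eq_one {G : Type*} [CommGroup G] (χ : commutator K →* G)
    {u v : K → G} {k₀ l₀ : K} (hu : ∀ k, u k * commutatorPairing χ k l₀ = 1)
    (hv : ∀ l, commutatorPairing χ k₀ l * v l = 1) (k l : K) :
    u (k * k₀) * commutatorPairing χ (k * k₀) (l * l₀) * v (l * l₀) =
      commutatorPairing χ k l * (commutatorPairing χ k₀ l₀)⁻¹ := by
  rw [eq_inv_of_mul_eq_one_left (hu _), eq_inv_of_mul_eq_one_right (hv _)]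
  simp only [commutatorPairing_mul_left hc, commutatorPairing_mul_right hc, mul_inv]
  apply Additive.ofMul.injective
  simp only [ofMul_mul, ofMul_inv]
  abel

theorem sum_commutatorPairing {R : Type*} [CommRing R] [IsDomain R] [Fintype K]
    (χ : commutator K →* Rˣ) (k : K) [Decidable (∀ l, commutatorPairing χ k l = 1)] :
    ∑ l, ((commutatorPairing χ k l : Rˣ) : R) =
      if ∀ l, commutatorPairing χ k l = 1 then (Fintype.card K : R) else 0 := by
  let f : K →* R :=
    { toFun l := ((commutatorPairing χ k l : Rˣ) : R)
      map_one' := by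
        simp only [commutatorPairing, commutatorElement_one_right, Units.val_eq_one]
        exact map_one χ
      map_mul' l l' := by simp [commutatorPairing_mul_right hc] }
  have hf : f = 1 ↔ ∀ l, commutatorPairing χ k l = 1 := by simp [f, MonoidHom.ext_iff]
  classical
  change ∑ l, f l = _
  rw [sum_hom_units f, Nat.cast_ite, Nat.cast_zero]
  exact if_congr hf rfl rfl

theorem sum_sum_commutatorPairing {R : Type*} [CommRing R] [IsDomain R] [Fintype K]
    (χ : commutator K →* Rˣ) :
    ∑ k, ∑ l, ((commutatorPairing χ k l : Rˣ) : R) =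
      Fintype.card K * Nat.card {k : K // ∀ l, commutatorPairing χ k l = 1} := by
  classical
  simp [sum_commutatorPairing hc χ, Finset.sum_ite, Nat.card_eq_fintype_card,
    Fintype.card_subtype, mul_comm]

end Sums

theorem abs_inner_product {K : Type*} [Group K] [Fintype K]
    (hc : commutator K ≤ Subgroup.center K)
    (χ : ↥(commutator K) →* ℂˣ) (φ ψ : K →* ↥(commutator K))
    (k₀ l₀ : K)
    (hk₀ : ∀ l : K, χ (⟨⁅k₀, l⁆, mem_comm' k₀ l⟩ * ψ l) = 1)
    (hl₀ : ∀ k : K, χ (φ k * ⟨⁅k, l₀⁆, mem_comm' k l₀⟩) = 1) :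
    ‖(1 / (Fintype.card K : ℂ) ^ 2) *
        ∑ k : K, ∑ l : K, (χ (φ k * ⟨⁅k, l⁆, mem_comm' k l⟩ * ψ l) : ℂ)‖ =
      (Nat.card {k : K // ∀ l : K, χ ⟨⁅k, l⁆, mem_comm' k l⟩ = 1} : ℝ) /
        (Fintype.card K : ℝ) := by
  set b := commutatorPairing χ
  have hterm (k l : K) : χ (φ (k * k₀) * ⟨⁅k * k₀, l * l₀⁆, mem_comm' _ _⟩ * ψ (l * l₀)) =
      b k l * (b k₀ l₀)⁻¹ := by
    rw [map_mul, map_mul]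
    exact mul_commutatorPairing_mul_of_mul_eq_one hc χ (u := χ ∘ φ) (v := χ ∘ ψ)
      (fun k => (map_mul χ _ _).symm.trans (hl₀ k))
      (fun l => (map_mul χ _ _).symm.trans (hk₀ l)) k l
  have hsum : ∑ k : K, ∑ l : K, (χ (φ k * ⟨⁅k, l⁆, mem_comm' k l⟩ * ψ l) : ℂ) =
      (∑ k, ∑ l, (b k l : ℂ)) * ((b k₀ l₀)⁻¹ : ℂˣ) := by
    rw [Finset.sum_mul]
    refine (Fintype.sum_equiv (Equiv.mulRight k₀) _ _ fun k => ?_).symm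
    rw [Finset.sum_mul]
    exact Fintype.sum_equiv (Equiv.mulRight l₀) _ _ fun l => by rw [← Units.val_mul, ← hterm]; rfl
  have hnorm : ‖(b k₀ l₀ : ℂ)‖ = 1 :=
    ((Units.coeHom ℂ).comp χ |>.isOfFinOrder (isOfFinOrder_of_finite _)).norm_eq_one
  rw [hsum, sum_sum_commutatorPairing hc, norm_mul, norm_mul, Units.val_inv_eq_inv_val, norm_inv,
    hnorm]
  simp only [one_div, norm_inv, norm_pow, norm_mul, Complex.norm_natCast, inv_one, mul_one]
  field_simp
  rfl
end

section
/- Let G be a finite group, K ⊴ G a normal subgroup, and C, D cosets of K in G. Fix coset representatives g ∈ C and h ∈ D. Then |{(a,b) ∈ C × D : ab = ba}| = |{(k,l) ∈ K × K : (h⁻¹kh k⁻¹)·(klk⁻¹l⁻¹)·(g⁻¹lg l⁻¹)⁻¹ = h⁻¹g⁻¹hg}|. -/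
private lemma key_iff {G : Type*} [Group G] (g h k l : G) :
    (h⁻¹ * k * h * k⁻¹) * (k * l * k⁻¹ * l⁻¹) * (g⁻¹ * l * g * l⁻¹)⁻¹ =
      h⁻¹ * g⁻¹ * h * g ↔ (g * k) * (h * l) = (h * l) * (g * k) := by
  rw [← mul_inv_eq_one, ← mul_inv_eq_one (a := (g * k) * (h * l))]
  have e1 : (h⁻¹ * k * h * k⁻¹) * (k * l * k⁻¹ * l⁻¹) * (g⁻¹ * l * g * l⁻¹)⁻¹ *
      (h⁻¹ * g⁻¹ * h * g)⁻¹ =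
      (g * h)⁻¹ * ((g * k) * (h * l) * ((h * l) * (g * k))⁻¹) * (g * h) := by
    group
  rw [e1]
  constructor
  · intro H
    have := congrArg (fun x => (g * h) * x * (g * h)⁻¹) H
    simpa [mul_assoc] using this
  · intro H
    rw [H]
    group

theorem coset_commuting_count {G : Type*} [Group G] [Finite G]
    (K : Subgroup G) [K.Normal] (g h : G) :
    Nat.card {p : G × G // g⁻¹ * p.1 ∈ K ∧ h⁻¹ * p.2 ∈ K ∧ p.1 * p.2 = p.2 * p.1} =
      Nat.card {q : K × K //
        (h⁻¹ * (q.1 : G) * h * (q.1 : G)⁻¹) *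
          ((q.1 : G) * (q.2 : G) * (q.1 : G)⁻¹ * (q.2 : G)⁻¹) *
          (g⁻¹ * (q.2 : G) * g * (q.2 : G)⁻¹)⁻¹ = h⁻¹ * g⁻¹ * h * g} := by
  apply Nat.card_congr
  refine
    { toFun := fun p => ⟨(⟨g⁻¹ * p.1.1, p.2.1⟩, ⟨h⁻¹ * p.1.2, p.2.2.1⟩), ?_⟩
      invFun := fun q => ⟨(g * q.1.1, h * q.1.2), ?_, ?_, ?_⟩
      left_inv := ?_
      right_inv := ?_ }
  · have := p.2.2.2
    rw [key_iff]
    simpa [mul_assoc] using this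
  · simpa [mul_assoc] using q.1.1.2
  · simpa [mul_assoc] using q.1.2.2
  · have := q.2
    rw [key_iff] at this
    exact this
  · intro p; ext <;> simp
  · intro q; ext <;> simp
end

section
/- Let G be a finite group, K ⊴ G a normal subgroup, and C, D ∈ G/K cosets. For g ∈ G let φ^g denote the endomorphism of the abelianization K/K' given by φ^g(kK') = (g⁻¹kg k⁻¹)K' (well-defined since conjugation by g preserves K). If there exist g ∈ C, h ∈ D with gh = hg, then |{(a,b) ∈ C × D : ab = ba}|/|K|² ≤ |im φ^C ∩ im φ^D| / (|im φ^C| · |im φ^D|), where φ^C = φ^g and φ^D = φ^h (these images are independent of the coset representatives when the representatives commute as assumed). -/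
/-!
Write a = g x and b = h y with x, y ∈ K. Since g and h commute, ab = ba is equivalent to
(h⁻¹ x h) y = (g⁻¹ y g) x in K, and in K/K' this forces φ^h(x) = φ^g(y). Hence the commuting
pairs inject into the fiber product of φ^h and φ^g over K/K'. Every nonempty fiber of a
homomorphism is a coset of its kernel, so that fiber product has
|im φ^h ∩ im φ^g| · |ker φ^h| · |ker φ^g| = |im φ^h ∩ im φ^g| · |K|² / (|im φ^h| · |im φ^g|)
elements.
-/

/-- The image of the map `kK' ↦ (g⁻¹ k g k⁻¹) K'` on the abelianization of `K`. -/
def phiIm {G : Type*} [Group G] (K : Subgroup G) [hN : K.Normal] (g : G) :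
    Set (Abelianization K) :=
  Set.range fun k : K =>
    Abelianization.of (⟨g⁻¹ * (k : G) * g, by simpa using hN.conj_mem _ k.2 g⁻¹⟩ * k⁻¹ : K)

namespace MonoidHom

variable {B A : Type*} [Group B] [Group A] (f₁ f₂ : B →* A)

def fiberProduct : Subgroup (B × B) :=
  (f₁.comp (MonoidHom.fst B B)).eqLocus (f₂.comp (MonoidHom.snd B B))

@[simp]
lemma mem_fiberProduct {p : B × B} : p ∈ fiberProduct f₁ f₂ ↔ f₁ p.1 = f₂ p.2 := Iff.rfl

lemma card_ker_mul_card_range {C : Type*} [Group C] (f : C →* A) :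
    Nat.card f.ker * Nat.card f.range = Nat.card C :=
  Subgroup.index_ker f ▸ f.ker.card_mul_index

lemma card_fiberProduct :
    Nat.card (fiberProduct f₁ f₂) =
      Nat.card ↥(f₁.range ⊓ f₂.range) * (Nat.card f₁.ker * Nat.card f₂.ker) := by
  set ψ := (f₁.comp (MonoidHom.fst B B)).domRestrict (fiberProduct f₁ f₂)
  have hrange : ψ.range = f₁.range ⊓ f₂.range := by
    ext a
    simp only [ψ, domRestrict_range, Subgroup.mem_map, mem_fiberProduct, coe_comp, coe_fst,
      Function.comp_apply, Prod.exists, Subgroup.mem_inf, mem_range]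
    constructor
    · rintro ⟨x, y, hxy, rfl⟩
      exact ⟨⟨x, rfl⟩, ⟨y, hxy.symm⟩⟩
    · rintro ⟨⟨x, rfl⟩, ⟨y, hy⟩⟩
      exact ⟨x, y, hy.symm, rfl⟩
  have hker : ψ.ker.map (fiberProduct f₁ f₂).subtype = f₁.ker.prod f₂.ker := by
    ext ⟨x, y⟩
    simp only [ψ, Subgroup.mem_map, mem_ker, Subgroup.mem_prod]
    constructor
    · rintro ⟨⟨p, hp⟩, hψ, rfl⟩
      exact ⟨hψ, (mem_fiberProduct f₁ f₂).1 hp ▸ hψ⟩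
    · rintro ⟨hx, hy⟩
      exact ⟨⟨(x, y), hx.trans hy.symm⟩, hx, rfl⟩
  rw [← card_ker_mul_card_range ψ, hrange,
    ← Subgroup.card_map_of_injective (Subgroup.subtype_injective _), hker,
    Nat.card_congr (Subgroup.prodEquiv _ _).toEquiv, Nat.card_prod, mul_comm]

lemma card_fiberProduct_mul_card_range_mul_card_range :
    Nat.card (fiberProduct f₁ f₂) * (Nat.card f₁.range * Nat.card f₂.range) =
      Nat.card ↥(f₁.range ⊓ f₂.range) * Nat.card B ^ 2 := by
  have h₁ := card_ker_mul_card_range f₁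
  have h₂ := card_ker_mul_card_range f₂
  rw [card_fiberProduct, sq]
  nth_rw 1 [← h₁]
  rw [← h₂]
  ring

end MonoidHom

section

variable {G : Type*} [Group G] (K : Subgroup G) [K.Normal]

noncomputable def phiHom (g : G) : K →* Abelianization K :=
  Abelianization.of.comp (MulAut.conjNormal g⁻¹).toMonoidHom / Abelianization.of

lemma phiHom_apply (g : G) (k : K) :
    phiHom K g k = Abelianization.of (MulAut.conjNormal g⁻¹ k) / Abelianization.of k := rfl

lemma coe_range_phiHom (g : G) : ((phiHom K g).range : Set (Abelianization K)) = phiIm K g := by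
  rw [MonoidHom.coe_range, phiIm]
  congr 1
  ext k
  rw [phiHom_apply, map_mul, map_inv, div_eq_mul_inv]
  congr 2
  ext
  simp

lemma phiHom_eq_of_commute {g h : G} (hgh : Commute g h) {x y : K}
    (hxy : Commute (g * x) (h * y)) : phiHom K h x = phiHom K g y := by
  have hK : MulAut.conjNormal h⁻¹ x * y = MulAut.conjNormal g⁻¹ y * x := by
    ext
    simp only [Subgroup.coe_mul, MulAut.conjNormal_apply, inv_inv]
    calc h⁻¹ * x * h * y = (g * h)⁻¹ * (g * x * (h * y)) := by group
      _ = (h * g)⁻¹ * (h * y * (g * x)) := by rw [hgh.eq, hxy.eq]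
      _ = g⁻¹ * y * g * x := by group
  rw [phiHom_apply, phiHom_apply, div_eq_div_iff_mul_eq_mul, ← map_mul, ← map_mul, hK]

lemma card_commutingPairs_le_card_fiberProduct [Finite G] {g h : G} (hgh : Commute g h) :
    Nat.card {p : G × G // g⁻¹ * p.1 ∈ K ∧ h⁻¹ * p.2 ∈ K ∧ p.1 * p.2 = p.2 * p.1} ≤
      Nat.card ((phiHom K h).fiberProduct (phiHom K g)) := by
  refine Nat.card_le_card_of_injective
    (fun p ↦ ⟨(⟨g⁻¹ * p.1.1, p.2.1⟩, ⟨h⁻¹ * p.1.2, p.2.2.1⟩), ?_⟩) ?_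
  · exact phiHom_eq_of_commute K hgh (by simpa [Commute, SemiconjBy] using p.2.2.2)
  · rintro ⟨⟨a, b⟩, _⟩ ⟨⟨a', b'⟩, _⟩ hp
    simp only [Subtype.ext_iff, Prod.ext_iff, mul_right_inj] at hp
    obtain ⟨rfl, rfl⟩ := hp
    rfl

end

theorem coset_commuting_bound {G : Type*} [Group G] [Finite G]
    (K : Subgroup G) [K.Normal] (g h : G) (hcomm : g * h = h * g) :
    (Nat.card {p : G × G //
        g⁻¹ * p.1 ∈ K ∧ h⁻¹ * p.2 ∈ K ∧ p.1 * p.2 = p.2 * p.1} : ℚ) /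
        (Nat.card K : ℚ) ^ 2 ≤
      (Nat.card ↥(phiIm K g ∩ phiIm K h) : ℚ) /
        ((Nat.card ↥(phiIm K g) : ℚ) * (Nat.card ↥(phiIm K h) : ℚ)) := by
  have hK : 0 < Nat.card K := Nat.card_pos
  have hg : 0 < Nat.card (phiHom K g).range := Nat.card_pos
  have hh : 0 < Nat.card (phiHom K h).range := Nat.card_pos
  rw [← coe_range_phiHom, ← coe_range_phiHom, Set.inter_comm, ← Subgroup.coe_inf]
  simp only [SetLike.coe_sort_coe]
  rw [div_le_div_iff₀ (by positivity) (by positivity), mul_comm (Nat.card (phiHom K g).range : ℚ)]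
  calc _ ≤ (Nat.card ((phiHom K h).fiberProduct (phiHom K g)) : ℚ) * _ := by
        gcongr
        exact card_commutingPairs_le_card_fiberProduct K hcomm
    _ = _ := by
        exact_mod_cast (phiHom K h).card_fiberProduct_mul_card_range_mul_card_range (phiHom K g)
end
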